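/- Let (A,b,c) and (A',b',c') be realizations of the same formal power series on Hilbert spaces H, H', with (A',b',c') observable. Define S₀ on span{p(A)c : p polynomial} by S₀(p(A)c) = p(A')c'. Then S₀ is closable: if xₙ = pₙ(A)c → 0 in H and S₀xₙ = pₙ(A')c' → y' in H', then y' = 0. -/

import Mathlib

/-!
Pairing `y'` with the observability vectors `(A'^*)ⁿ b'` moves the powers of `A'` onto
`pₖ(A') c'`; equality of the two power series then turns `⟪(A'^*)ⁿ b', pₖ(A') c'⟫` into
`⟪b, Aⁿ pₖ(A) c⟫`, which tends to `0` because `Aⁿ` is bounded. Hence `y'` is orthogonal to a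
set with dense span, so `y' = 0`.
-/

open Filter Topology Polynomial ContinuousLinearMap

section

variable {𝕜 E : Type*} [RCLike 𝕜] [NormedAddCommGroup E] [InnerProductSpace 𝕜 E]

local notation "⟪" x ", " y "⟫" => inner 𝕜 x y

theorem eq_zero_of_inner_eq_zero_of_topologicalClosure_span_eq_top [CompleteSpace E]
    {ι : Type*} {f : ι → E} (hf : (Submodule.span 𝕜 (Set.range f)).topologicalClosure = ⊤)
    {x : E} (h : ∀ i, ⟪f i, x⟫ = 0) : x = 0 := by
  have hortho : Submodule.span 𝕜 (Set.range f) ⟂ 𝕜 ∙ x :=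
    Submodule.isOrtho_span.mpr <| by simpa using h
  have hx : x ∈ (Submodule.span 𝕜 (Set.range f))ᗮ :=
    hortho.ge (Submodule.mem_span_singleton_self x)
  rwa [Submodule.topologicalClosure_eq_top_iff.mp hf, Submodule.mem_bot] at hx

theorem inner_adjoint_pow_apply [CompleteSpace E] (A : E →L[𝕜] E) (n : ℕ) (x y : E) :
    ⟪(adjoint A ^ n) x, y⟫ = ⟪x, (A ^ n) y⟫ := by
  rw [← star_eq_adjoint, ← star_pow, star_eq_adjoint, adjoint_inner_left]

end

theorem aeval_X_pow_mul_apply {𝕜 E : Type*} [NormedField 𝕜] [SeminormedAddCommGroup E]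
    [NormedSpace 𝕜 E] (A : E →L[𝕜] E) (n : ℕ) (p : 𝕜[X]) (x : E) :
    aeval A (X ^ n * p) x = (A ^ n) (aeval A p x) := by
  rw [map_mul, map_pow, aeval_X]; rfl

theorem stmt12_general {H H' : Type*}
    [NormedAddCommGroup H] [InnerProductSpace ℂ H]
    [NormedAddCommGroup H'] [InnerProductSpace ℂ H'] [CompleteSpace H']
    (A : H →L[ℂ] H) (b c : H) (A' : H' →L[ℂ] H') (b' c' : H')
    (hsame : ∀ p : Polynomial ℂ,
      @inner ℂ H _ b ((Polynomial.aeval A p) c) =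
        @inner ℂ H' _ b' ((Polynomial.aeval A' p) c'))
    (hobs : (Submodule.span ℂ
        (Set.range fun n : ℕ => ((ContinuousLinearMap.adjoint A') ^ n) b')).topologicalClosure
          = ⊤) :
    ∀ (p : ℕ → Polynomial ℂ) (y' : H'),
      Filter.Tendsto (fun n => (Polynomial.aeval A (p n)) c) Filter.atTop (nhds 0) →
      Filter.Tendsto (fun n => (Polynomial.aeval A' (p n)) c') Filter.atTop (nhds y') →
      y' = 0 := by
  intro p y' hx hy
  refine eq_zero_of_inner_eq_zero_of_topologicalClosure_span_eq_top hobs fun n => ?_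
  have hmoment : ∀ k, inner ℂ ((adjoint A' ^ n) b') (aeval A' (p k) c') =
      inner ℂ b ((A ^ n) (aeval A (p k) c)) := fun k => by
    rw [inner_adjoint_pow_apply, ← aeval_X_pow_mul_apply, ← aeval_X_pow_mul_apply, hsame]
  have hlim : Tendsto (fun k => inner ℂ ((adjoint A' ^ n) b') (aeval A' (p k) c')) atTop
      (𝓝 (inner ℂ ((adjoint A' ^ n) b') y')) :=
    tendsto_const_nhds.inner hy
  have hzero : Tendsto (fun k => inner ℂ b ((A ^ n) (aeval A (p k) c))) atTop (𝓝 0) := by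
    simpa using tendsto_const_nhds.inner (((A ^ n).continuous.tendsto 0).comp hx)
  exact tendsto_nhds_unique (hlim.congr hmoment) hzero

/-- Closability of `S₀ (p(A) c) := p(A') c'`: if two realizations generate the same
power series, `(A',b',c')` is observable, `pₙ(A) c → 0` and `pₙ(A') c' → y'`, then
`y' = 0`. -/
theorem stmt12 {H H' : Type*}
    [NormedAddCommGroup H] [InnerProductSpace ℂ H] [CompleteSpace H]
    [NormedAddCommGroup H'] [InnerProductSpace ℂ H'] [CompleteSpace H']
    (A : H →L[ℂ] H) (b c : H) (A' : H' →L[ℂ] H') (b' c' : H')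
    (hsame : ∀ p : Polynomial ℂ,
      @inner ℂ H _ b ((Polynomial.aeval A p) c) =
        @inner ℂ H' _ b' ((Polynomial.aeval A' p) c'))
    (hobs : (Submodule.span ℂ
        (Set.range fun n : ℕ => ((ContinuousLinearMap.adjoint A') ^ n) b')).topologicalClosure
          = ⊤) :
    ∀ (p : ℕ → Polynomial ℂ) (y' : H'),
      Filter.Tendsto (fun n => (Polynomial.aeval A (p n)) c) Filter.atTop (nhds 0) →
      Filter.Tendsto (fun n => (Polynomial.aeval A' (p n)) c') Filter.atTop (nhds y') →
      y' = 0 :=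
  stmt12_general A b c A' b' c' hsame hobs
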